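/- arXiv:1110.3254 — 2 statements merged into one kernel-verified Lean document; each statement's English description precedes it below -/
import Mathlib

section
/- Let ξ be an F_T-measurable random variable whose negative part ξ⁻ is integrable. Let Y be an adapted real-valued process on [0,T] with Y_0 integrable, let M be a supermartingale with M_0 = 0, and let G be an adapted, nonnegative, nondecreasing process with G_0 = 0, such that almost surely Y_t ≤ Y_s − (G_t − G_s) + (M_t − M_s) for all 0 ≤ s ≤ t ≤ T, and Y_T ≥ ξ almost surely. Then ξ is integrable, Y_t is integrable for every t ∈ [0,T], Y is a supermartingale, and Y_t ≥ E[ξ | F_t] almost surely for every t ∈ [0,T]. -/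
open MeasureTheory Filter Topology


lemma sandwich_integrable {Ω : Type*} {m0 : MeasurableSpace Ω} {μ : Measure Ω}
    {f a b : Ω → ℝ} (ha : Integrable a μ) (hb : Integrable b μ)
    (hf : AEStronglyMeasurable f μ) (h1 : a ≤ᵐ[μ] f) (h2 : f ≤ᵐ[μ] b) :
    Integrable f μ := by
  refine (ha.abs.add hb.abs).mono' hf ?_
  filter_upwards [h1, h2] with ω h1 h2
  simp only [Real.norm_eq_abs, Pi.add_apply]
  rcases abs_cases (a ω) with ⟨_, _⟩ <;> rcases abs_cases (b ω) with ⟨_, _⟩ <;>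
    rcases abs_cases (f ω) with ⟨h3, _⟩ <;> linarith

/-- If `ξ` is `F_T`-measurable with integrable negative part, `Y` is adapted
on `[0,T]` with `Y 0` integrable, `M` is a supermartingale with `M 0 = 0`, `G` is adapted,
nonnegative, nondecreasing with `G 0 = 0`, and almost surely
`Y t ≤ Y s - (G t - G s) + (M t - M s)` for `0 ≤ s ≤ t ≤ T` together with `Y T ≥ ξ`,
then `ξ` is integrable, each `Y t` is integrable, `Y` is a supermartingale on `[0,T]`,
and `Y t ≥ E[ξ | F_t]` a.s. for every `t ∈ [0,T]`. -/
theorem stmt_0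
    {Ω : Type*} {m0 : MeasurableSpace Ω} {μ : Measure Ω} [IsProbabilityMeasure μ]
    (ℱ : Filtration ℝ m0) (T : ℝ) (hT : 0 < T)
    (ξ : Ω → ℝ) (Y M G : ℝ → Ω → ℝ)
    -- ξ is F_T-measurable with integrable negative part
    (hξ_meas : StronglyMeasurable[ℱ T] ξ)
    (hξ_neg : Integrable (fun ω => max (-(ξ ω)) 0) μ)
    -- Y is adapted on [0,T] with Y 0 integrable
    (hY_adapted : ∀ t ∈ Set.Icc (0:ℝ) T, StronglyMeasurable[ℱ t] (Y t))
    (hY0_int : Integrable (Y 0) μ)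
    -- M is a supermartingale on [0,T] with M 0 = 0
    (hM_adapted : ∀ t ∈ Set.Icc (0:ℝ) T, StronglyMeasurable[ℱ t] (M t))
    (hM_int : ∀ t ∈ Set.Icc (0:ℝ) T, Integrable (M t) μ)
    (hM_super : ∀ s t : ℝ, 0 ≤ s → s ≤ t → t ≤ T → μ[M t | ℱ s] ≤ᵐ[μ] M s)
    (hM0 : ∀ᵐ ω ∂μ, M 0 ω = 0)
    -- G is adapted, nonnegative, nondecreasing with G 0 = 0
    (hG_adapted : ∀ t ∈ Set.Icc (0:ℝ) T, StronglyMeasurable[ℱ t] (G t))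
    (hG_nonneg : ∀ᵐ ω ∂μ, ∀ t ∈ Set.Icc (0:ℝ) T, 0 ≤ G t ω)
    (hG_mono : ∀ᵐ ω ∂μ, ∀ s t : ℝ, 0 ≤ s → s ≤ t → t ≤ T → G s ω ≤ G t ω)
    (hG0 : ∀ᵐ ω ∂μ, G 0 ω = 0)
    -- the supersolution inequalities
    (hineq : ∀ᵐ ω ∂μ, ∀ s t : ℝ, 0 ≤ s → s ≤ t → t ≤ T →
      Y t ω ≤ Y s ω - (G t ω - G s ω) + (M t ω - M s ω))
    (hterm : ∀ᵐ ω ∂μ, ξ ω ≤ Y T ω) :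
    Integrable ξ μ ∧
    (∀ t ∈ Set.Icc (0:ℝ) T, Integrable (Y t) μ) ∧
    (∀ s t : ℝ, 0 ≤ s → s ≤ t → t ≤ T → μ[Y t | ℱ s] ≤ᵐ[μ] Y s) ∧
    (∀ t ∈ Set.Icc (0:ℝ) T, μ[ξ | ℱ t] ≤ᵐ[μ] Y t) := by

  have hTmem : T ∈ Set.Icc (0:ℝ) T := ⟨le_of_lt hT, le_rfl⟩
  -- upper bound: Y t ≤ Y 0 + M t a.s.
  have hub : ∀ t ∈ Set.Icc (0:ℝ) T, ∀ᵐ ω ∂μ, Y t ω ≤ Y 0 ω + M t ω := by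
    intro t ht
    filter_upwards [hineq, hG0, hM0, hG_nonneg] with ω hiω hG0ω hM0ω hGn
    have h1 := hiω 0 t le_rfl ht.1 ht.2
    have h2 := hGn t ht
    linarith
  -- ξ integrable
  have hξ_int : Integrable ξ μ := by
    refine sandwich_integrable (a := fun ω => -(max (-(ξ ω)) 0))
      hξ_neg.neg (hY0_int.add (hM_int T hTmem))
      ((hξ_meas.mono (ℱ.le T)).aestronglyMeasurable) ?_ ?_
    · filter_upwards with ω
      simp only [neg_le]
      exact le_max_left _ _
    · filter_upwards [hterm, hub T hTmem] with ω h1 h2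
      exact h1.trans h2
  -- lower bound: ξ + (M t - M T) ≤ Y t a.s.
  have hlb : ∀ t ∈ Set.Icc (0:ℝ) T, ∀ᵐ ω ∂μ,
      ξ ω + (M t ω - M T ω) ≤ Y t ω := by
    intro t ht
    filter_upwards [hineq, hterm, hG_mono] with ω hiω htω hGm
    have h1 := hiω t T ht.1 ht.2 le_rfl
    have h2 := hGm t T ht.1 ht.2 le_rfl
    linarith
  -- integrability of Y t
  have hY_int : ∀ t ∈ Set.Icc (0:ℝ) T, Integrable (Y t) μ := by
    intro t ht
    refine sandwich_integrable (a := fun ω => ξ ω + (M t ω - M T ω))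
      (hξ_int.add ((hM_int t ht).sub (hM_int T hTmem)))
      (hY0_int.add (hM_int t ht))
      (((hY_adapted t ht).mono (ℱ.le t)).aestronglyMeasurable)
      (hlb t ht) (hub t ht)
  -- supermartingale property
  have hsuper : ∀ s t : ℝ, 0 ≤ s → s ≤ t → t ≤ T → μ[Y t | ℱ s] ≤ᵐ[μ] Y s := by
    intro s t hs hst htT
    have hsmem : s ∈ Set.Icc (0:ℝ) T := ⟨hs, hst.trans htT⟩
    have htmem : t ∈ Set.Icc (0:ℝ) T := ⟨hs.trans hst, htT⟩
    have hb : ∀ᵐ ω ∂μ, Y t ω ≤ Y s ω + (M t ω - M s ω) := by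
      filter_upwards [hineq, hG_mono] with ω hiω hGm
      have h1 := hiω s t hs hst htT
      have h2 := hGm s t hs hst htT
      linarith
    have hint : Integrable (Y s + (M t - M s)) μ :=
      (hY_int s hsmem).add ((hM_int t htmem).sub (hM_int s hsmem))
    have hb' : Y t ≤ᵐ[μ] Y s + (M t - M s) := hb
    have hYs : μ[Y s | ℱ s] = Y s :=
      condExp_of_stronglyMeasurable (ℱ.le s) (hY_adapted s hsmem) (hY_int s hsmem)
    have hMs : μ[M s | ℱ s] = M s :=
      condExp_of_stronglyMeasurable (ℱ.le s) (hM_adapted s hsmem) (hM_int s hsmem)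
    calc μ[Y t | ℱ s] ≤ᵐ[μ] μ[Y s + (M t - M s) | ℱ s] :=
          condExp_mono (hY_int t htmem) hint hb'
      _ =ᵐ[μ] μ[Y s | ℱ s] + (μ[M t | ℱ s] - μ[M s | ℱ s]) := by
          have h1 := condExp_add (μ := μ) (m := ℱ s) (hY_int s hsmem)
            ((hM_int t htmem).sub (hM_int s hsmem))
          have h2 := condExp_sub (μ := μ) (m := ℱ s) (hM_int t htmem) (hM_int s hsmem)
          filter_upwards [h1, h2] with ω h1 h2
          simp only [Pi.add_apply, Pi.sub_apply] at *
          rw [h1, h2]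
      _ ≤ᵐ[μ] Y s := by
          filter_upwards [hM_super s t hs hst htT] with ω h3
          simp only [Pi.add_apply, Pi.sub_apply, hYs, hMs]
          linarith
  refine ⟨hξ_int, hY_int, hsuper, ?_⟩
  intro t ht
  calc μ[ξ | ℱ t] ≤ᵐ[μ] μ[Y T | ℱ t] := condExp_mono hξ_int (hY_int T hTmem) hterm
    _ ≤ᵐ[μ] Y t := hsuper t T ht.1 ht.2 le_rfl
end

section
/- Let σ be a stopping time with values in [0,T], let (B_n)_{n≥1} be a countable partition of Ω with B_n ∈ F_σ for every n, and let (M^n)_{n≥1} be right-continuous supermartingales with M^n_0 = 0 for all n. Define the pasted process M̄_t := M^1_{t∧σ} + Σ_{n≥1} 1_{B_n} (M^n_{t∨σ} − M^n_σ) for t ∈ [0,T], and assume M̄_t is integrable for every t ∈ [0,T]. Then M̄ is a supermartingale with M̄_0 = 0. -/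
/-
Split `M̄_t = M¹_{t ∧ σ} + ∑ₙ 1_{Bₙ} (Mⁿ_{t ∨ σ} - Mⁿ_σ)`. The first term is a stopped
supermartingale. For `A ∈ F_s` the second term is compared on each `A ∩ Bₙ ∈ F_{σ ∨ s}` by
optional sampling between `σ ∨ s ≤ σ ∨ t`, and the pieces are summed by countable additivity.

Optional sampling for right-continuous supermartingales at bounded stopping times is reduced to
finitely valued stopping times by approximating from above on the dyadic grids: along the
approximations the sampled values form a reverse supermartingale with bounded expectations, hence
are uniformly integrable, and by right-continuity they converge pointwise, hence in `L¹` (Vitali).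
Adaptedness of `M̄_t` holds because `Bₙ` only matters on `{σ ≤ t}`, where `Bₙ ∩ {σ ≤ t} ∈ F_t`.
-/

open MeasureTheory Filter Topology

noncomputable def dyadicCeil (k : ℕ) (r : ℝ) : ℝ := ⌈r * 2 ^ k⌉ / 2 ^ k

section DyadicCeil

variable {k : ℕ} {r : ℝ}

lemma le_dyadicCeil : r ≤ dyadicCeil k r := by
  rw [dyadicCeil, le_div_iff₀ (by positivity)]
  exact Int.le_ceil _

lemma dyadicCeil_le_add : dyadicCeil k r ≤ r + (2 ^ k)⁻¹ := by
  rw [dyadicCeil, div_le_iff₀ (by positivity), add_mul, inv_mul_cancel₀ (by positivity)]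
  exact (Int.ceil_lt_add_one _).le

lemma dyadicCeil_le_iff {u : ℝ} : dyadicCeil k r ≤ u ↔ r ≤ ⌊u * 2 ^ k⌋ / 2 ^ k := by
  rw [dyadicCeil, div_le_iff₀ (by positivity), le_div_iff₀ (by positivity), ← Int.le_floor,
    Int.ceil_le]

lemma dyadicCeil_mono (k : ℕ) : Monotone (dyadicCeil k) := fun _ _ h => by
  unfold dyadicCeil
  gcongr

lemma dyadicCeil_le_of_le {z : ℤ} (h : r ≤ z / 2 ^ k) : dyadicCeil k r ≤ z / 2 ^ k := by
  rw [dyadicCeil, div_le_div_iff_of_pos_right (by positivity), Int.cast_le, Int.ceil_le,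
    ← le_div_iff₀ (by positivity)]
  exact h

lemma antitone_dyadicCeil (r : ℝ) : Antitone fun k => dyadicCeil k r := by
  refine antitone_nat_of_succ_le fun k => ?_
  have h : dyadicCeil k r = ((2 * ⌈r * 2 ^ k⌉ : ℤ) : ℝ) / 2 ^ (k + 1) := by
    rw [dyadicCeil, pow_succ]; push_cast; field_simp
  rw [h]
  exact dyadicCeil_le_of_le (h ▸ le_dyadicCeil)

lemma tendsto_dyadicCeil (r : ℝ) : Tendsto (fun k => dyadicCeil k r) atTop (𝓝[≥] r) := by
  refine tendsto_nhdsWithin_of_tendsto_nhds_of_eventually_within _ ?_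
    (Eventually.of_forall fun k => le_dyadicCeil)
  have h : Tendsto (fun k : ℕ => r + ((2 : ℝ) ^ k)⁻¹) atTop (𝓝 r) := by
    simpa using tendsto_const_nhds.add (tendsto_inv_atTop_zero.comp
      (tendsto_pow_atTop_atTop_of_one_lt (by norm_num : (1 : ℝ) < 2)))
  exact tendsto_of_tendsto_of_tendsto_of_le_of_le tendsto_const_nhds h
    (fun k => le_dyadicCeil) fun k => dyadicCeil_le_add

lemma dyadicCeil_mem_image {a b : ℝ} (ha : a ≤ r) (hb : r ≤ b) :
    dyadicCeil k r ∈ (Finset.Icc ⌈a * 2 ^ k⌉ ⌈b * 2 ^ k⌉).image fun z : ℤ => (z : ℝ) / 2 ^ k :=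
  Finset.mem_image.mpr ⟨_, Finset.mem_Icc.mpr ⟨by gcongr, by gcongr⟩, rfl⟩

end DyadicCeil

lemma tsum_indicator_apply_of_mem {ι α M : Type*} [AddCommMonoid M] [TopologicalSpace M]
    {B : ι → Set α} (hB : Pairwise (Function.onFun Disjoint B)) (f : ι → α → M) {n : ι} {x : α}
    (hx : x ∈ B n) : ∑' m, (B m).indicator (f m) x = f n x := by
  rw [tsum_eq_single n fun m hm => Set.indicator_of_notMem
    (Set.disjoint_left.mp (hB hm.symm) hx) _, Set.indicator_of_mem hx]

lemma continuousWithinAt_Ici_comp_projIcc {β : Type*} [TopologicalSpace β] {f : ℝ → β}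
    (hf : ∀ t, ContinuousWithinAt f (Set.Ici t) t) {a b : ℝ} (hab : a ≤ b) (t : ℝ) :
    ContinuousWithinAt (fun s => f (Set.projIcc a b hab s)) (Set.Ici t) t :=
  (hf _).comp (continuous_subtype_val.comp continuous_projIcc).continuousWithinAt
    fun _ hs => Set.monotone_projIcc hab hs

namespace MeasureTheory.IsStoppingTime

variable {Ω : Type*} {m0 : MeasurableSpace Ω} {ℱ : Filtration ℝ m0} {τ : Ω → ℝ}

lemma coe_min_const (hτ : IsStoppingTime ℱ fun ω => (τ ω : WithTop ℝ)) (t : ℝ) :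
    IsStoppingTime ℱ fun ω => ((min (τ ω) t : ℝ) : WithTop ℝ) := by
  simpa [WithTop.coe_min] using hτ.min_const t

lemma coe_max_const (hτ : IsStoppingTime ℱ fun ω => (τ ω : WithTop ℝ)) (t : ℝ) :
    IsStoppingTime ℱ fun ω => ((max (τ ω) t : ℝ) : WithTop ℝ) := by
  simpa [WithTop.coe_max] using hτ.max_const t

lemma measurableSet_le_coe (hτ : IsStoppingTime ℱ fun ω => (τ ω : WithTop ℝ)) (t : ℝ) :
    MeasurableSet[ℱ t] {ω | τ ω ≤ t} := by
  simpa using hτ.measurableSet_le t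

lemma dyadicCeil (hτ : IsStoppingTime ℱ fun ω => (τ ω : WithTop ℝ)) (k : ℕ) :
    IsStoppingTime ℱ fun ω => (dyadicCeil k (τ ω) : WithTop ℝ) := by
  intro u
  have hle : (⌊u * 2 ^ k⌋ : ℝ) / 2 ^ k ≤ u := by
    rw [div_le_iff₀ (by positivity)]; exact Int.floor_le _
  simp only [WithTop.coe_le_coe, dyadicCeil_le_iff]
  exact ℱ.mono hle _ (by simpa using hτ.measurableSet_le _)

lemma exists_forall_mem_of_mem_insert (hτ : IsStoppingTime ℱ fun ω => (τ ω : WithTop ℝ))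
    {a : ℝ} {s : Finset ℝ} (has : ∀ x ∈ s, a < x) (hne : s.Nonempty)
    (hτs : ∀ ω, τ ω ∈ insert a s) :
    ∃ τ' : Ω → ℝ, IsStoppingTime ℱ (fun ω => (τ' ω : WithTop ℝ)) ∧ (∀ ω, τ' ω ∈ s) ∧
      ∀ ω, a < τ ω → τ' ω = τ ω := by
  refine ⟨fun ω => max (τ ω) (s.min' hne), hτ.coe_max_const _, fun ω => ?_,
    fun ω h => max_eq_left <| s.min'_le _ <| (Finset.mem_insert.mp (hτs ω)).resolve_left h.ne'⟩
  dsimp only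
  rcases Finset.mem_insert.mp (hτs ω) with h | h
  · rw [max_eq_right (h ▸ (has _ (s.min'_mem hne)).le)]
    exact s.min'_mem hne
  · rwa [max_eq_left (s.min'_le _ h)]

end MeasureTheory.IsStoppingTime

theorem MeasureTheory.StronglyAdapted.isStronglyProgressive_of_rightContinuous
    {Ω : Type*} {m0 : MeasurableSpace Ω} {ℱ : Filtration ℝ m0} {u : ℝ → Ω → ℝ}
    (h : StronglyAdapted ℱ u) (hu : ∀ ω t, ContinuousWithinAt (u · ω) (Set.Ici t) t) :
    IsStronglyProgressive ℱ u := by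
  intro t
  let _ : MeasurableSpace (Set.Iic t × Ω) := Subtype.instMeasurableSpace.prod (ℱ t)
  -- approximate from the right on dyadic grids, capped at `t` so as not to look ahead
  have approx (k : ℕ) : StronglyMeasurable fun p : Set.Iic t × Ω =>
      u (min t (dyadicCeil k p.1)) p.2 := by
    have hg : Measurable[@Prod.instMeasurableSpace ℤ Ω _ (ℱ t)]
        fun q : ℤ × Ω => u (min t (q.1 / 2 ^ k)) q.2 :=
      measurable_from_prod_countable_right fun z =>
        ((h (min t (z / 2 ^ k))).mono (ℱ.mono (min_le_left _ _))).measurable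
    refine (hg.comp (Measurable.prodMk ?_ measurable_snd)).stronglyMeasurable
    exact Int.measurable_ceil.comp
      ((measurable_subtype_coe.comp measurable_fst).mul_const _)
  refine stronglyMeasurable_of_tendsto atTop approx (tendsto_pi_nhds.mpr fun p => ?_)
  have hp : (p.1 : ℝ) ≤ t := p.1.2
  refine (hu p.2 p.1).tendsto.comp (tendsto_nhdsWithin_of_tendsto_nhds_of_eventually_within _ ?_
    (Eventually.of_forall fun k => le_min hp le_dyadicCeil))
  simpa [min_eq_right hp] using
    (tendsto_const_nhds (x := t)).min (tendsto_nhdsWithin_iff.mp (tendsto_dyadicCeil (p.1 : ℝ))).1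

namespace MeasureTheory

variable {Ω : Type*} {m0 : MeasurableSpace Ω} {μ : Measure Ω}

lemma eLpNorm_one_indicator_eq_ofReal_setIntegral_abs {f : Ω → ℝ} {s : Set Ω}
    (hf : Integrable f μ) (hs : MeasurableSet s) :
    eLpNorm (s.indicator f) 1 μ = ENNReal.ofReal (∫ x in s, |f x| ∂μ) := by
  rw [eLpNorm_one_eq_lintegral_enorm, ← ofReal_integral_norm_eq_lintegral_enorm (hf.indicator hs),
    ← integral_indicator hs]
  simp_rw [norm_indicator_eq_indicator_norm, Real.norm_eq_abs]

lemma Integrable.exists_pos_setIntegral_abs_le {f : Ω → ℝ} (hf : Integrable f μ) {ε : ℝ}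
    (hε : 0 < ε) :
    ∃ δ > 0, ∀ s, MeasurableSet s → μ s ≤ ENNReal.ofReal δ → ∫ x in s, |f x| ∂μ ≤ ε := by
  obtain ⟨δ, hδ, h⟩ := (memLp_one_iff_integrable.mpr hf).eLpNorm_indicator_le le_rfl
    ENNReal.one_ne_top hε
  refine ⟨δ, hδ, fun s hs hμs => ?_⟩
  have := h s hs hμs
  rwa [eLpNorm_one_indicator_eq_ofReal_setIntegral_abs hf hs,
    ENNReal.ofReal_le_ofReal_iff hε.le] at this

lemma measure_le_abs_le_ofReal_integral_div [IsFiniteMeasure μ] {f : Ω → ℝ}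
    (hf : Integrable f μ) {c : ℝ} (hc : 0 < c) :
    μ {x | c ≤ |f x|} ≤ ENNReal.ofReal ((∫ x, |f x| ∂μ) / c) := by
  rw [← ENNReal.ofReal_toReal (measure_ne_top μ _)]
  refine ENNReal.ofReal_le_ofReal ((le_div_iff₀ hc).mpr ?_)
  rw [mul_comm]
  exact mul_meas_ge_le_integral_of_nonneg (ae_of_all μ fun x => abs_nonneg (f x)) hf.abs c

lemma setIntegral_abs_eq {f : Ω → ℝ} (hf : StronglyMeasurable f) (hfi : Integrable f μ)
    (s : Set Ω) :
    ∫ x in s, |f x| ∂μ = ∫ x in s, f x ∂μ - 2 * ∫ x in s ∩ {x | f x < 0}, f x ∂μ := by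
  have hneg : MeasurableSet {x | f x < 0} := hf.measurable measurableSet_Iio
  rw [← setIntegral_indicator hneg, ← integral_const_mul,
    ← integral_sub hfi.integrableOn ((hfi.indicator hneg).const_mul 2).integrableOn]
  congr 1 with x
  by_cases hx : f x < 0
  · simp [hx, abs_of_neg]
    ring
  · simp [hx, abs_of_nonneg (not_lt.mp hx)]

section ReverseSupermartingale

variable {G : ℕ → MeasurableSpace Ω} {X : ℕ → Ω → ℝ}

lemma setIntegral_abs_le_of_reverse_supermartingale (hG : ∀ k, G k ≤ m0)
    (hX : ∀ k, StronglyMeasurable[G k] (X k)) (hXi : ∀ k, Integrable (X k) μ)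
    (hrev : ∀ j k, j ≤ k → ∀ C, MeasurableSet[G k] C →
      ∫ ω in C, X j ω ∂μ ≤ ∫ ω in C, X k ω ∂μ)
    {a : ℝ} (ha : ∀ k, ∫ ω, X k ω ∂μ ≤ a) ⦃m k : ℕ⦄ (hmk : m ≤ k) ⦃S : Set Ω⦄
    (hS : MeasurableSet[G k] S) :
    ∫ ω in S, |X k ω| ∂μ ≤
      (a - ∫ ω, X m ω ∂μ) + ∫ ω in S, |X m ω| ∂μ + 2 * ∫ ω in S, |X 0 ω| ∂μ := by
  have hup : ∫ ω in S, X k ω ∂μ ≤ (a - ∫ ω, X m ω ∂μ) + ∫ ω in S, X m ω ∂μ := by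
    have h1 := integral_add_compl (hG k _ hS) (hXi k)
    have h2 := integral_add_compl (hG k _ hS) (hXi m)
    linarith [hrev m k hmk Sᶜ hS.compl, ha k]
  have hneg : MeasurableSet[G k] (S ∩ {ω | X k ω < 0}) :=
    hS.inter ((hX k).measurable measurableSet_Iio)
  have h1 : ∫ ω in S, X m ω ∂μ ≤ ∫ ω in S, |X m ω| ∂μ :=
    setIntegral_mono (hXi m).integrableOn (hXi m).abs.integrableOn fun ω => le_abs_self _
  have h2 : -∫ ω in S, |X 0 ω| ∂μ ≤ ∫ ω in S ∩ {ω | X k ω < 0}, X 0 ω ∂μ := by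
    rw [neg_le]
    refine (neg_le_abs _).trans (abs_integral_le_integral_abs.trans ?_)
    exact setIntegral_mono_set (hXi 0).abs.integrableOn (ae_of_all _ fun ω => abs_nonneg _)
      (Eventually.of_forall Set.inter_subset_left)
  rw [setIntegral_abs_eq ((hX k).mono (hG k)) (hXi k)]
  linarith [hrev 0 k (Nat.zero_le k) _ hneg]

theorem uniformIntegrable_of_reverse_supermartingale [IsFiniteMeasure μ] (hG : ∀ k, G k ≤ m0)
    (hX : ∀ k, StronglyMeasurable[G k] (X k)) (hXi : ∀ k, Integrable (X k) μ)
    (hrev : ∀ j k, j ≤ k → ∀ C, MeasurableSet[G k] C →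
      ∫ ω in C, X j ω ∂μ ≤ ∫ ω in C, X k ω ∂μ)
    (hbdd : BddAbove (Set.range fun k => ∫ ω, X k ω ∂μ)) :
    UniformIntegrable X 1 μ := by
  set e : ℕ → ℝ := fun k => ∫ ω, X k ω ∂μ
  have he : Monotone e := monotone_nat_of_le_succ fun k => by
    simpa using hrev k (k + 1) k.le_succ Set.univ MeasurableSet.univ
  set a := ⨆ k, e k
  have htail := setIntegral_abs_le_of_reverse_supermartingale hG hX hXi hrev (le_ciSup hbdd)
  set b := (a - e 0) + 3 * ∫ ω, |X 0 ω| ∂μ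
  have hb : ∀ k, ∫ ω, |X k ω| ∂μ ≤ b := fun k => by
    have := htail (Nat.zero_le k) MeasurableSet.univ
    simp only [Measure.restrict_univ] at this
    linarith
  refine uniformIntegrable_of le_rfl ENNReal.one_ne_top
    (fun k => ((hX k).mono (hG k)).aestronglyMeasurable) fun ε hε => ?_
  obtain ⟨m, hm⟩ : ∃ m, a - e m < ε / 2 :=
    ((tendsto_atTop_ciSup he hbdd).eventually (lt_mem_nhds (by linarith : a - ε / 2 < a))).exists
      |>.imp fun m hm => by linarith
  set h : Ω → ℝ := fun ω => ∑ j ∈ Finset.range (m + 1), |X j ω|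
  have hhi : Integrable h μ := integrable_finsetSum _ fun j _ => (hXi j).abs
  have hXh : ∀ j ≤ m, ∀ S, ∫ ω in S, |X j ω| ∂μ ≤ ∫ ω in S, |h ω| ∂μ := fun j hj S =>
    setIntegral_mono (hXi j).abs.integrableOn hhi.abs.integrableOn fun ω =>
      (Finset.single_le_sum (f := fun i => |X i ω|) (fun i _ => abs_nonneg _)
        (Finset.mem_range.mpr (Nat.lt_succ_of_le hj))).trans (le_abs_self _)
  obtain ⟨δ, hδ, hδS⟩ := hhi.exists_pos_setIntegral_abs_le (by positivity : 0 < ε / 6)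
  have hc : 0 < b / δ + 1 := by positivity [(integral_nonneg fun ω => abs_nonneg _).trans (hb 0)]
  refine ⟨(b / δ + 1).toNNReal, fun k => ?_⟩
  set S := {ω | b / δ + 1 ≤ |X k ω|}
  have hSk : MeasurableSet[G k] S :=
    (hX k).measurable (isClosed_le continuous_const continuous_abs).measurableSet
  have hS_eq : {ω | (b / δ + 1).toNNReal ≤ ‖X k ω‖₊} = S := by
    ext ω
    simp [S, ← NNReal.coe_le_coe, Real.coe_toNNReal _ hc.le]
  have hμS : μ S ≤ ENNReal.ofReal δ :=
    (measure_le_abs_le_ofReal_integral_div (hXi k) hc).trans <| ENNReal.ofReal_le_ofReal <|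
      (div_le_iff₀ hc).mpr <| (hb k).trans <| by
        rw [mul_add, mul_div_cancel₀ _ hδ.ne', mul_one]; linarith
  have hhS := hδS S (hG k _ hSk) hμS
  rw [hS_eq, eLpNorm_one_indicator_eq_ofReal_setIntegral_abs (hXi k) (hG k _ hSk)]
  refine ENNReal.ofReal_le_ofReal ?_
  rcases le_total k m with hkm | hmk
  · linarith [hXh k hkm S]
  · linarith [htail hmk hSk, hXh m le_rfl S, hXh 0 (Nat.zero_le m) S]

end ReverseSupermartingale

lemma measurable_of_eqOn_of_iUnion_eq_univ {β ι : Type*} [MeasurableSpace β] [Countable ι]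
    {A : ι → Set Ω} (hA : ∀ i, MeasurableSet (A i)) (hcover : ⋃ i, A i = Set.univ)
    {f : Ω → β} {g : ι → Ω → β} (hg : ∀ i, Measurable (g i)) (hfg : ∀ i, Set.EqOn f (g i) (A i)) :
    Measurable f := fun S hS => by
  have : f ⁻¹' S = ⋃ i, A i ∩ g i ⁻¹' S := by
    ext ω
    obtain ⟨i, hi⟩ := Set.mem_iUnion.mp (hcover ▸ Set.mem_univ ω)
    simp only [Set.mem_preimage, Set.mem_iUnion, Set.mem_inter_iff]
    exact ⟨fun h => ⟨i, hi, hfg i hi ▸ h⟩, fun ⟨j, hj, h⟩ => hfg j hj ▸ h⟩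
  rw [this]
  exact .iUnion fun i => (hA i).inter (hg i hS)

lemma integral_le_of_forall_setIntegral_le {ι : Type*} [Countable ι] {B : ι → Set Ω}
    (hBm : ∀ n, MeasurableSet (B n)) (hBd : Pairwise (Function.onFun Disjoint B))
    (hBc : ⋃ n, B n = Set.univ) {f g : Ω → ℝ} (hf : Integrable f μ) (hg : Integrable g μ)
    (h : ∀ n, ∫ x in B n, f x ∂μ ≤ ∫ x in B n, g x ∂μ) :
    ∫ x, f x ∂μ ≤ ∫ x, g x ∂μ := by
  have hsum : ∀ f : Ω → ℝ, Integrable f μ → HasSum (fun n => ∫ x in B n, f x ∂μ) (∫ x, f x ∂μ) :=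
    fun f hf => by
      simpa [hBc] using hasSum_integral_iUnion hBm hBd (hBc ▸ hf.integrableOn)
  exact hasSum_le h (hsum f hf) (hsum g hg)

lemma condExp_le_of_forall_setIntegral_le [IsFiniteMeasure μ] {m : MeasurableSpace Ω}
    (hm : m ≤ m0) {f g : Ω → ℝ} (hf : Integrable f μ) (hg : Integrable g μ)
    (hgm : StronglyMeasurable[m] g)
    (h : ∀ s, MeasurableSet[m] s → ∫ x in s, f x ∂μ ≤ ∫ x in s, g x ∂μ) :
    μ[f | m] ≤ᵐ[μ] g := by
  refine ae_le_of_ae_le_trim (ae_le_of_forall_setIntegral_le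
    (integrable_condExp.trim hm stronglyMeasurable_condExp) (hg.trim hm hgm) fun s hs _ => ?_)
  rw [← setIntegral_trim hm stronglyMeasurable_condExp hs, ← setIntegral_trim hm hgm hs,
    setIntegral_condExp hm hf hs]
  exact h s hs

end MeasureTheory

namespace MeasureTheory.Supermartingale

variable {Ω : Type*} {m0 : MeasurableSpace Ω} {μ : Measure Ω}
  {ℱ : Filtration ℝ m0} {N : ℝ → Ω → ℝ}

lemma integrable_stoppedValue_of_mem_finset (hN : Supermartingale N ℱ μ) {τ : Ω → ℝ}
    (hτ : IsStoppingTime ℱ fun ω => (τ ω : WithTop ℝ)) {s : Finset ℝ} (hτs : ∀ ω, τ ω ∈ s) :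
    Integrable (fun ω => N (τ ω) ω) μ :=
  MeasureTheory.integrable_stoppedValue_of_mem_finset hτ hN.integrable fun ω => ⟨_, hτs ω, rfl⟩

variable [IsFiniteMeasure μ]

lemma setIntegral_stoppedValue_le_of_le (hN : Supermartingale N ℱ μ) {ρ : Ω → ℝ}
    (hρ : IsStoppingTime ℱ fun ω => (ρ ω : WithTop ℝ)) {s : Finset ℝ} (hρs : ∀ ω, ρ ω ∈ s)
    {v : ℝ} {D : Set Ω} (hD : MeasurableSet[ℱ v] D) (hvρ : ∀ ω ∈ D, v ≤ ρ ω) :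
    ∫ ω in D, N (ρ ω) ω ∂μ ≤ ∫ ω in D, N v ω ∂μ := by
  classical
  induction s using Finset.induction_on_min generalizing ρ v D with
  | empty =>
    simp [Set.eq_empty_of_forall_notMem fun ω (_ : ω ∈ D) => by simpa using hρs ω]
  | insert a s has ih =>
    have hDm : MeasurableSet D := ℱ.le v _ hD
    have hρa : ∀ ω, ρ ω ≤ a → ρ ω = a := fun ω h => by
      rcases Finset.mem_insert.mp (hρs ω) with h' | h'
      · exact h'
      · exact absurd h (not_le.mpr (has _ h'))
    rcases s.eq_empty_or_nonempty with rfl | hne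
    · have hρ_eq : ∀ ω, ρ ω = a := fun ω => by simpa using hρs ω
      rw [setIntegral_congr_fun (g := N a) hDm fun ω _ => by simp only [hρ_eq]]
      rcases D.eq_empty_or_nonempty with rfl | ⟨ω, hω⟩
      · simp
      · exact hN.setIntegral_le (hρ_eq ω ▸ hvρ ω hω) hD
    obtain ⟨ρ', hρ', hρ's, hρ'_eq⟩ := hρ.exists_forall_mem_of_mem_insert has hne hρs
    rcases lt_or_ge a v with hav | hva
    · have heq : ∀ ω ∈ D, ρ' ω = ρ ω := fun ω hω => hρ'_eq ω (hav.trans_le (hvρ ω hω))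
      rw [setIntegral_congr_fun (g := fun ω => N (ρ' ω) ω) hDm fun ω hω => by
        simp only [heq ω hω]]
      exact ih hρ' hρ's hD fun ω hω => (heq ω hω).symm ▸ hvρ ω hω
    have hle : {ω | ρ ω ≤ a} = {ω | (ρ ω : WithTop ℝ) ≤ a} := by simp
    have hlem : MeasurableSet {ω | ρ ω ≤ a} := hle ▸ ℱ.le a _ (hρ.measurableSet_le a)
    have hD' : MeasurableSet[ℱ a] (D \ {ω | ρ ω ≤ a}) :=
      (ℱ.mono hva _ hD).diff (hle ▸ hρ.measurableSet_le a)
    have hint := hN.integrable_stoppedValue_of_mem_finset hρ hρs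
    calc ∫ ω in D, N (ρ ω) ω ∂μ
        = ∫ ω in D ∩ {ω | ρ ω ≤ a}, N a ω ∂μ + ∫ ω in D \ {ω | ρ ω ≤ a}, N (ρ' ω) ω ∂μ := by
          rw [← integral_inter_add_sdiff hlem hint.integrableOn,
            setIntegral_congr_fun (g := N a) (hDm.inter hlem) fun ω hω => by
              simp only [hρa ω hω.2],
            setIntegral_congr_fun (g := fun ω => N (ρ' ω) ω) (hDm.diff hlem) fun ω hω => by
              simp only [hρ'_eq ω (not_le.mp hω.2)]]
      _ ≤ ∫ ω in D ∩ {ω | ρ ω ≤ a}, N a ω ∂μ + ∫ ω in D \ {ω | ρ ω ≤ a}, N a ω ∂μ :=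
          add_le_add le_rfl <| ih hρ' hρ's hD' fun ω hω =>
            (hρ'_eq ω (not_le.mp hω.2)).symm ▸ (not_le.mp hω.2).le
      _ = ∫ ω in D, N a ω ∂μ := integral_inter_add_sdiff hlem (hN.integrable a).integrableOn
      _ ≤ ∫ ω in D, N v ω ∂μ := hN.setIntegral_le hva hD

lemma setIntegral_stoppedValue_le_of_finset (hN : Supermartingale N ℱ μ) {τ π : Ω → ℝ}
    (hτ : IsStoppingTime ℱ fun ω => (τ ω : WithTop ℝ))
    (hπ : IsStoppingTime ℱ fun ω => (π ω : WithTop ℝ)) (hle : ∀ ω, τ ω ≤ π ω) {s : Finset ℝ}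
    (hτs : ∀ ω, τ ω ∈ s) (hπs : ∀ ω, π ω ∈ s) {C : Set Ω}
    (hC : MeasurableSet[hτ.measurableSpace] C) :
    ∫ ω in C, N (π ω) ω ∂μ ≤ ∫ ω in C, N (τ ω) ω ∂μ := by
  have hpiece : ∀ v, MeasurableSet[ℱ v] (C ∩ {ω | τ ω = v}) := fun v => by
    have h := (hC.2 v).inter (hτ.measurableSet_eq v)
    simp only [WithTop.coe_le_coe, WithTop.coe_inj] at h
    convert h using 1
    ext ω
    simp +contextual
  have hcover : C = ⋃ v ∈ s, C ∩ {ω | τ ω = v} := by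
    ext ω
    simp only [Set.mem_iUnion, Set.mem_inter_iff, Set.mem_ofPred_eq, exists_prop]
    exact ⟨fun h => ⟨τ ω, hτs ω, h, rfl⟩, fun ⟨_, _, h, _⟩ => h⟩
  have hdisj : (s : Set ℝ).Pairwise (Function.onFun Disjoint fun v => C ∩ {ω | τ ω = v}) :=
    fun v _ w _ hvw => Set.disjoint_left.mpr fun ω h h' => hvw (h.2.symm.trans h'.2)
  have hsplit : ∀ f : Ω → ℝ, Integrable f μ →
      ∫ ω in C, f ω ∂μ = ∑ v ∈ s, ∫ ω in C ∩ {ω | τ ω = v}, f ω ∂μ := fun f hf => by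
    conv_lhs => rw [hcover]
    exact integral_biUnion_finset s (fun v _ => ℱ.le v _ (hpiece v)) hdisj
      fun v _ => hf.integrableOn
  rw [hsplit _ (hN.integrable_stoppedValue_of_mem_finset hπ hπs),
    hsplit _ (hN.integrable_stoppedValue_of_mem_finset hτ hτs)]
  refine Finset.sum_le_sum fun v _ => ?_
  rw [setIntegral_congr_fun (f := fun ω => N (τ ω) ω) (g := N v) (ℱ.le v _ (hpiece v))
    fun ω hω => by simp only [show τ ω = v from hω.2]]
  exact hN.setIntegral_stoppedValue_le_of_le hπ hπs (hpiece v) fun ω hω => hω.2 ▸ hle ω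

variable {τ : Ω → ℝ} {a b : ℝ}

theorem uniformIntegrable_stoppedValue_dyadicCeil (hN : Supermartingale N ℱ μ)
    (hrc : ∀ ω t, ContinuousWithinAt (N · ω) (Set.Ici t) t)
    (hτ : IsStoppingTime ℱ fun ω => (τ ω : WithTop ℝ)) (ha : ∀ ω, a ≤ τ ω)
    (hb : ∀ ω, τ ω ≤ b) :
    UniformIntegrable (fun k ω => N (dyadicCeil k (τ ω)) ω) 1 μ := by
  set F : ℕ → Finset ℝ := fun k =>
    (Finset.Icc ⌈a * 2 ^ k⌉ ⌈b * 2 ^ k⌉).image fun z : ℤ => (z : ℝ) / 2 ^ k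
  have hF : ∀ k ω, dyadicCeil k (τ ω) ∈ F k := fun k ω => dyadicCeil_mem_image (ha ω) (hb ω)
  have hprog := hN.stronglyAdapted.isStronglyProgressive_of_rightContinuous hrc
  refine uniformIntegrable_of_reverse_supermartingale
    (G := fun k => (hτ.dyadicCeil k).measurableSpace)
    (fun k => (hτ.dyadicCeil k).measurableSpace_le)
    (fun k => (measurable_stoppedValue hprog (hτ.dyadicCeil k)).stronglyMeasurable)
    (fun k => hN.integrable_stoppedValue_of_mem_finset (hτ.dyadicCeil k) (hF k))
    (fun j k hjk C hC => hN.setIntegral_stoppedValue_le_of_finset (hτ.dyadicCeil k)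
      (hτ.dyadicCeil j) (fun ω => antitone_dyadicCeil (τ ω) hjk)
      (fun ω => Finset.mem_union_left _ (hF k ω)) (fun ω => Finset.mem_union_right _ (hF j ω)) hC)
    ⟨∫ ω, N a ω ∂μ, ?_⟩
  rintro _ ⟨k, rfl⟩
  simpa using hN.setIntegral_stoppedValue_le_of_finset (τ := fun _ => a)
    (isStoppingTime_const ℱ a) (hτ.dyadicCeil k) (fun ω => (ha ω).trans le_dyadicCeil)
    (fun _ => Finset.mem_insert_self a (F k)) (fun ω => Finset.mem_insert_of_mem (hF k ω))
    MeasurableSet.univ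

theorem integrable_stoppedValue (hN : Supermartingale N ℱ μ)
    (hrc : ∀ ω t, ContinuousWithinAt (N · ω) (Set.Ici t) t)
    (hτ : IsStoppingTime ℱ fun ω => (τ ω : WithTop ℝ)) (ha : ∀ ω, a ≤ τ ω)
    (hb : ∀ ω, τ ω ≤ b) :
    Integrable (fun ω => N (τ ω) ω) μ :=
  (hN.uniformIntegrable_stoppedValue_dyadicCeil hrc hτ ha hb).integrable_of_ae_tendsto
    (ae_of_all _ fun ω => (hrc ω (τ ω)).tendsto.comp (tendsto_dyadicCeil (τ ω)))

theorem tendsto_setIntegral_stoppedValue_dyadicCeil (hN : Supermartingale N ℱ μ)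
    (hrc : ∀ ω t, ContinuousWithinAt (N · ω) (Set.Ici t) t)
    (hτ : IsStoppingTime ℱ fun ω => (τ ω : WithTop ℝ)) (ha : ∀ ω, a ≤ τ ω)
    (hb : ∀ ω, τ ω ≤ b) (s : Set Ω) :
    Tendsto (fun k => ∫ ω in s, N (dyadicCeil k (τ ω)) ω ∂μ) atTop
      (𝓝 (∫ ω in s, N (τ ω) ω ∂μ)) := by
  have hUI := hN.uniformIntegrable_stoppedValue_dyadicCeil hrc hτ ha hb
  have hint := hN.integrable_stoppedValue hrc hτ ha hb
  refine tendsto_setIntegral_of_L1' _ hint.1 (Eventually.of_forall fun k => ?_) ?_ s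
  · exact hN.integrable_stoppedValue_of_mem_finset (hτ.dyadicCeil k)
      fun ω => dyadicCeil_mem_image (ha ω) (hb ω)
  · exact tendsto_Lp_finite_of_tendsto_ae le_rfl ENNReal.one_ne_top hUI.1
      (memLp_one_iff_integrable.mpr hint) hUI.2.1
      (ae_of_all _ fun ω => (hrc ω (τ ω)).tendsto.comp (tendsto_dyadicCeil (τ ω)))

theorem setIntegral_stoppedValue_le (hN : Supermartingale N ℱ μ)
    (hrc : ∀ ω t, ContinuousWithinAt (N · ω) (Set.Ici t) t) {π : Ω → ℝ}
    (hτ : IsStoppingTime ℱ fun ω => (τ ω : WithTop ℝ))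
    (hπ : IsStoppingTime ℱ fun ω => (π ω : WithTop ℝ)) (hle : ∀ ω, τ ω ≤ π ω)
    (ha : ∀ ω, a ≤ τ ω) (hb : ∀ ω, π ω ≤ b) {C : Set Ω}
    (hC : MeasurableSet[hτ.measurableSpace] C) :
    ∫ ω in C, N (π ω) ω ∂μ ≤ ∫ ω in C, N (τ ω) ω ∂μ := by
  refine le_of_tendsto_of_tendsto'
    (hN.tendsto_setIntegral_stoppedValue_dyadicCeil hrc hπ (fun ω => (ha ω).trans (hle ω)) hb C)
    (hN.tendsto_setIntegral_stoppedValue_dyadicCeil hrc hτ ha (fun ω => (hle ω).trans (hb ω)) C)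
    fun k => ?_
  exact hN.setIntegral_stoppedValue_le_of_finset (hτ.dyadicCeil k) (hπ.dyadicCeil k)
    (fun ω => dyadicCeil_mono k (hle ω))
    (fun ω => dyadicCeil_mem_image (ha ω) ((hle ω).trans (hb ω)))
    (fun ω => dyadicCeil_mem_image ((ha ω).trans (hle ω)) (hb ω))
    (hτ.measurableSpace_mono (hτ.dyadicCeil k)
      (fun ω => WithTop.coe_le_coe.mpr le_dyadicCeil) _ hC)

theorem setIntegral_stoppedValue_min_le (hN : Supermartingale N ℱ μ)
    (hrc : ∀ ω t, ContinuousWithinAt (N · ω) (Set.Ici t) t) {σ : Ω → ℝ}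
    (hσ : IsStoppingTime ℱ fun ω => (σ ω : WithTop ℝ)) (hσab : ∀ ω, σ ω ∈ Set.Icc a b)
    {s t : ℝ} (hst : s ≤ t) {A : Set Ω} (hA : MeasurableSet[ℱ s] A) :
    ∫ ω in A, N (min (σ ω) t) ω ∂μ ≤ ∫ ω in A, N (min (σ ω) s) ω ∂μ := by
  have hle := hσ.measurableSet_le_coe s
  have hAm : MeasurableSet A := ℱ.le s _ hA
  have hint : ∀ r, Integrable (fun ω => N (min (σ ω) r) ω) μ := fun r =>
    hN.integrable_stoppedValue hrc (hσ.coe_min_const r) (fun ω => min_le_min_right r (hσab ω).1)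
      fun ω => (min_le_left _ _).trans (hσab ω).2
  -- on `{s < σ}` this is optional sampling between the constant time `s` and `σ ∧ t ∨ s`
  have hlate : ∫ ω in A \ {ω | σ ω ≤ s}, N (min (σ ω) t) ω ∂μ
      ≤ ∫ ω in A \ {ω | σ ω ≤ s}, N (min (σ ω) s) ω ∂μ := by
    have hC : MeasurableSet[ℱ s] (A \ {ω | σ ω ≤ s}) := hA.diff hle
    have key := hN.setIntegral_stoppedValue_le hrc (isStoppingTime_const ℱ s)
      ((hσ.coe_min_const t).coe_max_const s) (fun _ => le_max_right _ s) (a := s)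
      (b := max b t) (fun _ => le_rfl)
      (fun ω => max_le_max ((min_le_left _ _).trans (hσab ω).2) hst)
      (C := A \ {ω | σ ω ≤ s}) (by rwa [IsStoppingTime.measurableSpace_const])
    refine (setIntegral_congr_fun (ℱ.le s _ hC) fun ω hω => ?_).trans_le
      (key.trans_eq (setIntegral_congr_fun (ℱ.le s _ hC) fun ω hω => ?_))
    · have : s < σ ω := not_le.mp (show ¬σ ω ≤ s from hω.2)
      simp only [max_eq_left (le_min this.le hst)]
    · simp only [min_eq_right (not_le.mp (show ¬σ ω ≤ s from hω.2)).le]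
  rw [← integral_inter_add_sdiff (ℱ.le s _ hle) (hint t).integrableOn,
    ← integral_inter_add_sdiff (ℱ.le s _ hle) (hint s).integrableOn,
    setIntegral_congr_fun (g := fun ω => N (min (σ ω) s) ω) (hAm.inter (ℱ.le s _ hle))
      fun ω (hω : _ ∧ σ ω ≤ s) => by simp only [min_eq_left hω.2, min_eq_left (hω.2.trans hst)]]
  exact add_le_add le_rfl hlate

theorem setIntegral_stoppedValue_max_le (hN : Supermartingale N ℱ μ)
    (hrc : ∀ ω t, ContinuousWithinAt (N · ω) (Set.Ici t) t) {σ : Ω → ℝ}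
    (hσ : IsStoppingTime ℱ fun ω => (σ ω : WithTop ℝ)) (hσb : ∀ ω, σ ω ≤ b) {s t : ℝ}
    (hst : s ≤ t) {B A : Set Ω} (hB : MeasurableSet[hσ.measurableSpace] B)
    (hA : MeasurableSet[ℱ s] A) :
    ∫ ω in B ∩ A, N (max (σ ω) t) ω ∂μ ≤ ∫ ω in B ∩ A, N (max (σ ω) s) ω ∂μ := by
  have hC : MeasurableSet[(hσ.coe_max_const s).measurableSpace] (B ∩ A) :=
    (hσ.measurableSpace_mono (hσ.coe_max_const s)
      (fun ω => WithTop.coe_le_coe.mpr (le_max_left _ _)) _ hB).inter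
      ((hσ.coe_max_const s).le_measurableSpace_of_const_le
        (fun ω => WithTop.coe_le_coe.mpr (le_max_right _ _)) _ hA)
  exact hN.setIntegral_stoppedValue_le hrc (hσ.coe_max_const s) (hσ.coe_max_const t)
    (fun ω => max_le_max_left _ hst) (a := s) (b := max b t) (fun ω => le_max_right _ _)
    (fun ω => max_le_max_right t (hσb ω)) hC

end MeasureTheory.Supermartingale

theorem MeasureTheory.supermartingale_comp_projIcc {Ω : Type*} {m0 : MeasurableSpace Ω}
    {μ : Measure Ω} [IsFiniteMeasure μ] {ℱ : Filtration ℝ m0} {M : ℝ → Ω → ℝ} {T : ℝ}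
    (hT : 0 ≤ T) (hadp : ∀ t ∈ Set.Icc 0 T, StronglyMeasurable[ℱ t] (M t))
    (hint : ∀ t ∈ Set.Icc 0 T, Integrable (M t) μ)
    (hsup : ∀ s t : ℝ, 0 ≤ s → s ≤ t → t ≤ T → μ[M t | ℱ s] ≤ᵐ[μ] M s)
    (hM0 : ∀ ω, M 0 ω = 0) :
    Supermartingale (fun t => M (Set.projIcc 0 T hT t)) ℱ μ := by
  have hpi : ∀ t, Integrable (M (Set.projIcc 0 T hT t)) μ := fun t =>
    hint _ (Set.projIcc 0 T hT t).2
  have hadp' : StronglyAdapted ℱ fun t => M (Set.projIcc 0 T hT t) := fun t => by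
    rcases le_or_gt 0 t with ht | ht
    · exact (hadp _ (Set.projIcc 0 T hT t).2).mono (ℱ.mono (max_le ht (min_le_right _ _)))
    · have : M (Set.projIcc 0 T hT t) = fun _ => 0 := funext fun ω => by
        rw [Set.projIcc_of_le_left hT ht.le]; exact hM0 ω
      simp only [this, stronglyMeasurable_const]
  refine ⟨hadp', fun i j hij => ?_, hpi⟩
  refine condExp_le_of_forall_setIntegral_le (ℱ.le i) (hpi j) (hpi i) (hadp' i) fun A hA => ?_
  rcases le_or_gt i T with hiT | hTi
  · have hA' : MeasurableSet[ℱ (Set.projIcc 0 T hT i)] A :=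
      ℱ.mono (le_max_of_le_right (le_min hiT le_rfl)) _ hA
    rw [← setIntegral_condExp (ℱ.le _) (hpi j) hA']
    exact setIntegral_mono_ae integrable_condExp.integrableOn (hpi i).integrableOn
      (hsup _ _ (Set.projIcc 0 T hT i).2.1 (Set.monotone_projIcc hT hij)
        (Set.projIcc 0 T hT j).2.2)
  · simp only [Set.projIcc_of_right_le hT hTi.le, Set.projIcc_of_right_le hT (hTi.le.trans hij),
      le_refl]

section Pasting

variable {Ω : Type*} {m0 : MeasurableSpace Ω} {μ : Measure Ω} {ℱ : Filtration ℝ m0}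
  {N : ℕ → ℝ → Ω → ℝ} {σ : Ω → ℝ} {B : ℕ → Set Ω}

/-- The pasted process `M̄` of the paper on `B n`, with `N 0` in the role of `M¹`. -/
def pasting (N : ℕ → ℝ → Ω → ℝ) (σ : Ω → ℝ) (n : ℕ) (t : ℝ) (ω : Ω) : ℝ :=
  N 0 (min (σ ω) t) ω + (N n (max (σ ω) t) ω - N n (σ ω) ω)

theorem stronglyMeasurable_of_eqOn_pasting (hN : ∀ n, IsStronglyProgressive ℱ (N n))
    (hσ : IsStoppingTime ℱ fun ω => (σ ω : WithTop ℝ)) (hB_cover : ⋃ n, B n = Set.univ)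
    (hB : ∀ n, MeasurableSet[hσ.measurableSpace] (B n)) {X : Ω → ℝ} {t : ℝ}
    (hX : ∀ n, Set.EqOn X (pasting N σ n t) (B n)) :
    StronglyMeasurable[ℱ t] X := by
  have hle := hσ.measurableSet_le_coe t
  have hstop : ∀ n, StronglyMeasurable[ℱ t] fun ω => N n (min (σ ω) t) ω := fun n =>
    stronglyMeasurable_stoppedValue_of_le (hN n) (hσ.coe_min_const t)
      fun ω => WithTop.coe_le_coe.mpr (min_le_right _ _)
  -- `B n` itself need not be in `ℱ t`, but it is only needed where `σ ≤ t`
  refine (measurable_of_eqOn_of_iUnion_eq_univ (m0 := ℱ t)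
    (A := fun n => B n ∩ {ω | σ ω ≤ t} ∪ {ω | σ ω ≤ t}ᶜ)
    (g := fun n ω => N 0 (min (σ ω) t) ω +
      {ω | σ ω ≤ t}.indicator (fun ω => N n t ω - N n (min (σ ω) t) ω) ω)
    (fun n => ?_) ?_ (fun n => ?_) fun n ω hω => ?_).stronglyMeasurable
  · refine MeasurableSet.union ?_ hle.compl
    simpa using (hB n).2 t
  · refine Set.eq_univ_of_forall fun ω => ?_
    obtain ⟨n, hn⟩ := Set.mem_iUnion.mp (hB_cover ▸ Set.mem_univ ω)
    by_cases h : σ ω ≤ t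
    · exact Set.mem_iUnion.mpr ⟨n, Or.inl ⟨hn, h⟩⟩
    · exact Set.mem_iUnion.mpr ⟨0, Or.inr h⟩
  · exact ((hstop 0).add ((((hN n).stronglyAdapted t).sub (hstop n)).indicator hle)).measurable
  · rcases hω with ⟨hn, h : σ ω ≤ t⟩ | (h : ¬σ ω ≤ t)
    · simp [hX n hn, pasting, h]
    · obtain ⟨m, hm⟩ := Set.mem_iUnion.mp (hB_cover ▸ Set.mem_univ ω)
      simp [hX m hm, pasting, h, max_eq_left (not_le.mp h).le]

theorem setIntegral_le_of_eqOn_pasting [IsFiniteMeasure μ]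
    (hN : ∀ n, Supermartingale (N n) ℱ μ)
    (hrc : ∀ n ω t, ContinuousWithinAt (N n · ω) (Set.Ici t) t)
    (hσ : IsStoppingTime ℱ fun ω => (σ ω : WithTop ℝ)) {a b : ℝ}
    (hσab : ∀ ω, σ ω ∈ Set.Icc a b) (hB_disj : Pairwise (Function.onFun Disjoint B))
    (hB_cover : ⋃ n, B n = Set.univ) (hB : ∀ n, MeasurableSet[hσ.measurableSpace] (B n))
    {X Y : Ω → ℝ} {s t : ℝ} (hst : s ≤ t) (hX : ∀ n, Set.EqOn X (pasting N σ n s) (B n))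
    (hY : ∀ n, Set.EqOn Y (pasting N σ n t) (B n)) (hXi : Integrable X μ)
    (hYi : Integrable Y μ) {A : Set Ω} (hA : MeasurableSet[ℱ s] A) :
    ∫ ω in A, Y ω ∂μ ≤ ∫ ω in A, X ω ∂μ := by
  have hAm : MeasurableSet A := ℱ.le s _ hA
  have hBm : ∀ n, MeasurableSet (B n) := fun n => hσ.measurableSpace_le _ (hB n)
  set U : ℝ → Ω → ℝ := fun r ω => N 0 (min (σ ω) r) ω
  have hUi : ∀ r, Integrable (U r) μ := fun r =>
    (hN 0).integrable_stoppedValue (hrc 0) (hσ.coe_min_const r)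
      (fun ω => min_le_min_right r (hσab ω).1) fun ω => (min_le_left _ _).trans (hσab ω).2
  have hVi : ∀ n r, Integrable (fun ω => N n (max (σ ω) r) ω) μ := fun n r =>
    (hN n).integrable_stoppedValue (hrc n) (hσ.coe_max_const r)
      (fun ω => (hσab ω).1.trans (le_max_left _ _)) fun ω => max_le_max_right r (hσab ω).2
  have hσi : ∀ n, Integrable (fun ω => N n (σ ω) ω) μ := fun n =>
    (hN n).integrable_stoppedValue (hrc n) hσ (fun ω => (hσab ω).1) fun ω => (hσab ω).2
  have hinc : ∀ n r (Z : Ω → ℝ), Set.EqOn Z (pasting N σ n r) (B n) →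
      Set.EqOn (fun ω => Z ω - U r ω) (fun ω => N n (max (σ ω) r) ω - N n (σ ω) ω) (B n ∩ A) :=
    fun n r Z hZ ω hω => by simp only [hZ hω.1, pasting, U]; ring
  -- after `σ`, compare the increments on each `B n ∩ A`, which lies in `F_{σ ∨ s}`
  have hafter : ∫ ω in A, (Y ω - U t ω) ∂μ ≤ ∫ ω in A, (X ω - U s ω) ∂μ := by
    refine integral_le_of_forall_setIntegral_le hBm hB_disj hB_cover
      ((hYi.sub (hUi t)).restrict) ((hXi.sub (hUi s)).restrict) fun n => ?_
    rw [Measure.restrict_restrict (hBm n),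
      setIntegral_congr_fun ((hBm n).inter hAm) (hinc n t Y (hY n)),
      setIntegral_congr_fun ((hBm n).inter hAm) (hinc n s X (hX n)),
      integral_sub (hVi n t).integrableOn (hσi n).integrableOn,
      integral_sub (hVi n s).integrableOn (hσi n).integrableOn]
    exact sub_le_sub_right ((hN n).setIntegral_stoppedValue_max_le (hrc n) hσ
      (fun ω => (hσab ω).2) hst (hB n) hA) _
  have hbefore : ∫ ω in A, U t ω ∂μ ≤ ∫ ω in A, U s ω ∂μ :=
    (hN 0).setIntegral_stoppedValue_min_le (hrc 0) hσ hσab hst hA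
  rw [integral_sub hYi.integrableOn (hUi t).integrableOn,
    integral_sub hXi.integrableOn (hUi s).integrableOn] at hafter
  linarith

end Pasting

theorem stmt_1_general
    {Ω : Type*} {m0 : MeasurableSpace Ω} {μ : Measure Ω} [IsProbabilityMeasure μ]
    (ℱ : Filtration ℝ m0) (T : ℝ)
    -- the stopping time σ with values in [0,T]
    (σ : Ω → ℝ) (hσ : IsStoppingTime ℱ (fun ω => (σ ω : WithTop ℝ))) (hσ_mem : ∀ ω, σ ω ∈ Set.Icc (0:ℝ) T)
    -- the partition (B n) of Ω with B n ∈ F_σ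
    (B : ℕ → Set Ω)
    (hB_disj : Pairwise (Function.onFun Disjoint B))
    (hB_cover : (⋃ n, B n) = Set.univ)
    (hB_meas : ∀ n, MeasurableSet[hσ.measurableSpace] (B n))
    -- the right-continuous supermartingales M n with M n 0 = 0
    (M : ℕ → ℝ → Ω → ℝ)
    (hM_rc : ∀ n ω t, ContinuousWithinAt (fun s => M n s ω) (Set.Ici t) t)
    (hM_adapted : ∀ n, ∀ t ∈ Set.Icc (0:ℝ) T, StronglyMeasurable[ℱ t] (M n t))
    (hM_int : ∀ n, ∀ t ∈ Set.Icc (0:ℝ) T, Integrable (M n t) μ)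
    (hM_super : ∀ n, ∀ s t : ℝ, 0 ≤ s → s ≤ t → t ≤ T → μ[M n t | ℱ s] ≤ᵐ[μ] M n s)
    (hM0 : ∀ n ω, M n 0 ω = 0)
    -- the pasted process
    (Mbar : ℝ → Ω → ℝ)
    (hMbar : ∀ t ω, Mbar t ω = M 0 (min t (σ ω)) ω +
      ∑' n, (B n).indicator (fun ω' => M n (max t (σ ω')) ω' - M n (σ ω') ω') ω)
    (hMbar_int : ∀ t ∈ Set.Icc (0:ℝ) T, Integrable (Mbar t) μ) :
    (∀ t ∈ Set.Icc (0:ℝ) T, StronglyMeasurable[ℱ t] (Mbar t)) ∧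
    (∀ s t : ℝ, 0 ≤ s → s ≤ t → t ≤ T → μ[Mbar t | ℱ s] ≤ᵐ[μ] Mbar s) ∧
    (∀ᵐ ω ∂μ, Mbar 0 ω = 0) := by
  obtain ⟨ω₀⟩ := nonempty_of_isProbabilityMeasure μ
  have hT : 0 ≤ T := (hσ_mem ω₀).1.trans (hσ_mem ω₀).2
  -- extend each `M n` beyond `[0, T]` by freezing it, to get supermartingales indexed by `ℝ`
  set N : ℕ → ℝ → Ω → ℝ := fun n t => M n (Set.projIcc 0 T hT t)
  have hN : ∀ n, Supermartingale (N n) ℱ μ := fun n =>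
    supermartingale_comp_projIcc hT (hM_adapted n) (hM_int n) (hM_super n) (hM0 n)
  have hN_rc : ∀ n ω t, ContinuousWithinAt (N n · ω) (Set.Ici t) t := fun n ω =>
    continuousWithinAt_Ici_comp_projIcc (hM_rc n ω) hT
  have hpaste : ∀ t ∈ Set.Icc 0 T, ∀ n, Set.EqOn (Mbar t) (pasting N σ n t) (B n) := by
    intro t ht n ω hω
    have hmin : min t (σ ω) ∈ Set.Icc 0 T := ⟨le_min ht.1 (hσ_mem ω).1, min_le_of_left_le ht.2⟩
    have hmax : max t (σ ω) ∈ Set.Icc 0 T := ⟨le_max_of_le_left ht.1, max_le ht.2 (hσ_mem ω).2⟩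
    rw [hMbar, tsum_indicator_apply_of_mem hB_disj _ hω]
    simp only [pasting, N, min_comm (σ ω) t, max_comm (σ ω) t, Set.projIcc_of_mem hT hmin,
      Set.projIcc_of_mem hT hmax, Set.projIcc_of_mem hT (hσ_mem ω)]
  have hmeas : ∀ t ∈ Set.Icc 0 T, StronglyMeasurable[ℱ t] (Mbar t) := fun t ht =>
    stronglyMeasurable_of_eqOn_pasting
      (fun n => (hN n).stronglyAdapted.isStronglyProgressive_of_rightContinuous (hN_rc n))
      hσ hB_cover hB_meas (hpaste t ht)
  refine ⟨hmeas, fun s t hs hst htT => ?_, ae_of_all _ fun ω => ?_⟩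
  · have hs' : s ∈ Set.Icc 0 T := ⟨hs, hst.trans htT⟩
    have ht' : t ∈ Set.Icc 0 T := ⟨hs.trans hst, htT⟩
    exact condExp_le_of_forall_setIntegral_le (ℱ.le s) (hMbar_int t ht') (hMbar_int s hs')
      (hmeas s hs') fun A hA => setIntegral_le_of_eqOn_pasting hN hN_rc hσ hσ_mem hB_disj
        hB_cover hB_meas hst (hpaste s hs') (hpaste t ht') (hMbar_int s hs') (hMbar_int t ht') hA
  · have hmax : ∀ ω', max 0 (σ ω') = σ ω' := fun ω' => max_eq_right (hσ_mem ω').1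
    simp [hMbar, min_eq_left (hσ_mem ω).1, hmax, hM0]

/-- Pasting of supermartingales at a stopping time `σ` along a countable
`F_σ`-measurable partition `(B n)`: if each `M n` is a right-continuous supermartingale on
`[0,T]` starting at `0`, and the pasted process
`M̄ t = M 0 (t ∧ σ) + ∑' n, 1_{B n} (M n (t ∨ σ) - M n σ)` is integrable at every
`t ∈ [0,T]`, then `M̄` is a supermartingale on `[0,T]` with `M̄ 0 = 0`.
(The index `0` plays the role of the index `1` in the paper.  The filtration is assumed
complete, as part of the usual conditions.) -/
theorem stmt_1
    {Ω : Type*} {m0 : MeasurableSpace Ω} {μ : Measure Ω} [IsProbabilityMeasure μ]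
    (ℱ : Filtration ℝ m0) (T : ℝ) (hT : 0 < T)
    -- completeness of the filtration (usual conditions)
    (hcomp : ∀ s : Set Ω, μ s = 0 → MeasurableSet[ℱ 0] s)
    -- the stopping time σ with values in [0,T]
    (σ : Ω → ℝ) (hσ : IsStoppingTime ℱ (fun ω => (σ ω : WithTop ℝ))) (hσ_mem : ∀ ω, σ ω ∈ Set.Icc (0:ℝ) T)
    -- the partition (B n) of Ω with B n ∈ F_σ
    (B : ℕ → Set Ω)
    (hB_disj : Pairwise (Function.onFun Disjoint B))
    (hB_cover : (⋃ n, B n) = Set.univ)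
    (hB_meas : ∀ n, MeasurableSet[hσ.measurableSpace] (B n))
    -- the right-continuous supermartingales M n with M n 0 = 0
    (M : ℕ → ℝ → Ω → ℝ)
    (hM_rc : ∀ n ω t, ContinuousWithinAt (fun s => M n s ω) (Set.Ici t) t)
    (hM_adapted : ∀ n, ∀ t ∈ Set.Icc (0:ℝ) T, StronglyMeasurable[ℱ t] (M n t))
    (hM_int : ∀ n, ∀ t ∈ Set.Icc (0:ℝ) T, Integrable (M n t) μ)
    (hM_super : ∀ n, ∀ s t : ℝ, 0 ≤ s → s ≤ t → t ≤ T → μ[M n t | ℱ s] ≤ᵐ[μ] M n s)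
    (hM0 : ∀ n ω, M n 0 ω = 0)
    -- the pasted process
    (Mbar : ℝ → Ω → ℝ)
    (hMbar : ∀ t ω, Mbar t ω = M 0 (min t (σ ω)) ω +
      ∑' n, (B n).indicator (fun ω' => M n (max t (σ ω')) ω' - M n (σ ω') ω') ω)
    (hMbar_int : ∀ t ∈ Set.Icc (0:ℝ) T, Integrable (Mbar t) μ) :
    (∀ t ∈ Set.Icc (0:ℝ) T, StronglyMeasurable[ℱ t] (Mbar t)) ∧
    (∀ s t : ℝ, 0 ≤ s → s ≤ t → t ≤ T → μ[Mbar t | ℱ s] ≤ᵐ[μ] Mbar s) ∧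
    (∀ᵐ ω ∂μ, Mbar 0 ω = 0) :=
  stmt_1_general ℱ T σ hσ hσ_mem B hB_disj hB_cover hB_meas M hM_rc hM_adapted hM_int hM_super hM0
    Mbar hMbar hMbar_int
end
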